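/- Let x_1, x_2, x_3, ... be the sequence of rational functions in two variables x_1, x_2 defined by x_{n+1} = (x_n^2 + 1)/x_{n-1} for n ≥ 2. Then for every n ≥ 0, x_{n+3} = x_1^{-(n+1)} x_2^{-n} ( x_2^{2(n+1)} + Σ_{q+r ≤ n} C(n-r, q) C(n+1-q, r) x_1^{2q} x_2^{2r} ). -/

import Mathlib

noncomputable section

/-- The ambient field `ℚ(x₁, x₂)` of rational functions in two variables. -/
abbrev Kfield : Type := FractionRing (MvPolynomial (Fin 2) ℚ)

/-- The first indeterminate `x₁`. -/
def X1 : Kfield := algebraMap (MvPolynomial (Fin 2) ℚ) Kfield (MvPolynomial.X 0)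

/-- The second indeterminate `x₂`. -/
def X2 : Kfield := algebraMap (MvPolynomial (Fin 2) ℚ) Kfield (MvPolynomial.X 1)


set_option linter.unreachableTactic false
set_option linter.unusedTactic false

def bb (n q r : ℕ) : ℕ := (n - r).choose q * (n + 1 - q).choose r


lemma bb_key (n q r : ℕ) :
    bb (n+2) (q+1) (r+1) + bb n q r
      = bb (n+1) q (r+1) + bb (n+1) (q+1) r + bb (n+1) (q+1) (r+1) := by
  unfold bb
  have e1 : n + 2 - (r+1) = n + 1 - r := by omega
  have e2 : n + 3 - (q+1) = n + 2 - q := by omega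
  have e3 : n + 1 - (r+1) = n - r := by omega
  have e4 : n + 2 - (q+1) = n + 1 - q := by omega
  rw [e1, e2, e3, e4]
  rcases le_or_gt r n with hr | hr
  · rcases le_or_gt q (n+1) with hq | hq
    · have f1 : n + 1 - r = (n - r) + 1 := by omega
      have f2 : n + 2 - q = (n + 1 - q) + 1 := by omega
      rw [f1, f2, Nat.choose_succ_succ (n - r) q, Nat.choose_succ_succ (n + 1 - q) r]
      ring
    · -- q ≥ n+2 : n+1-q = 0, n+2-q = 0
      have f1 : n + 1 - q = 0 := by omega
      have f2 : n + 2 - q = 0 := by omega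
      rw [f1, f2]
      rcases Nat.eq_zero_or_pos r with hr0 | hr0
      · subst hr0
        simp only [Nat.sub_zero, Nat.choose_zero_right, mul_one, Nat.choose_eq_zero_of_lt (by omega : 0 < q + 1), mul_zero, zero_mul]
        rw [Nat.choose_eq_zero_of_lt (by omega : n < q), Nat.choose_eq_zero_of_lt (by omega : n + 1 < q + 1)]
        simp
      · have : r ≠ 0 := by omega
        simp [Nat.choose_eq_zero_of_lt (by omega : 0 < r), Nat.choose_eq_zero_of_lt (by omega : 0 < r+1)]
  · -- r ≥ n+1 : n - r = 0, n+1-r = 0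
    have f1 : n - r = 0 := by omega
    have f2 : n + 1 - r = 0 := by omega
    rw [f1, f2]
    rcases Nat.eq_zero_or_pos q with hq0 | hq0
    · subst hq0
      simp only [Nat.choose_zero_right, Nat.choose_eq_zero_of_lt (by omega : 0 < 0 + 1)]
      rcases eq_or_lt_of_le (by omega : n + 1 ≤ r) with h | h
      · rw [← h]
        simp [Nat.choose_self]
      · simp only [Nat.sub_zero]
        rw [Nat.choose_eq_zero_of_lt (by omega : n + 1 < r),
          Nat.choose_eq_zero_of_lt (by omega : n + 1 + 1 < r + 1)]
        simp
    · simp [Nat.choose_eq_zero_of_lt (by omega : 0 < q), Nat.choose_eq_zero_of_lt (by omega : 0 < q+1)]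

lemma bb_left (n r : ℕ) :
    bb (n+2) 0 (r+1) = bb (n+1) 0 r + bb (n+1) 0 (r+1) := by
  unfold bb
  simp only [Nat.choose_zero_right, one_mul, Nat.sub_zero]
  exact Nat.choose_succ_succ (n+2) r

lemma bb_bottom (n q : ℕ) :
    bb (n+2) (q+1) 0 = bb (n+1) q 0 + bb (n+1) (q+1) 0 := by
  unfold bb
  simp only [Nat.sub_zero, Nat.choose_zero_right, mul_one]
  exact Nat.choose_succ_succ (n+1) q

lemma bb_zero (n : ℕ) : bb n 0 0 = 1 := by simp [bb]

lemma bb_zero_of_lt_q {n q : ℕ} (h : n < q) (r : ℕ) : bb n q r = 0 := by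
  unfold bb
  rw [Nat.choose_eq_zero_of_lt (by omega : n - r < q), zero_mul]

lemma bb_zero_of_lt_r {n r : ℕ} (h : n + 1 < r) (q : ℕ) : bb n q r = 0 := by
  unfold bb
  rw [Nat.choose_eq_zero_of_lt (by omega : n + 1 - q < r), mul_zero]

lemma bb_zero_of_diag {n q r : ℕ} (hq : 1 ≤ q) (h : n + 1 - q ≤ r) : bb n q r = 0 := by
  unfold bb
  rw [Nat.choose_eq_zero_of_lt (by omega : n - r < q), zero_mul]

lemma bb_top (n : ℕ) : bb n 0 (n+1) = 1 := by simp [bb]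

/-- generic rectangle sum -/
def SS (N M n : ℕ) : Kfield :=
  ∑ q ∈ Finset.range N, ∑ r ∈ Finset.range M,
    (bb n q r : Kfield) * X1 ^ (2 * q) * X2 ^ (2 * r)

def Sp (n : ℕ) : Kfield := SS (n + 2) (n + 2) n

lemma SS_pad {n N M : ℕ} (h : n + 2 ≤ N) (h' : n + 2 ≤ M) : SS N M n = Sp n := by
  unfold SS Sp
  have inner : ∀ M, n + 2 ≤ M → ∀ q : ℕ,
      ∑ r ∈ Finset.range M, (bb n q r : Kfield) * X1 ^ (2 * q) * X2 ^ (2 * r)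
        = ∑ r ∈ Finset.range (n+2), (bb n q r : Kfield) * X1 ^ (2 * q) * X2 ^ (2 * r) := by
    intro M hM q
    refine (Finset.sum_subset (Finset.range_subset_range.2 hM) ?_).symm
    intro r _ hr
    rw [bb_zero_of_lt_r (by simp at hr; omega) q]
    simp
  calc ∑ q ∈ Finset.range N, ∑ r ∈ Finset.range M,
        (bb n q r : Kfield) * X1 ^ (2 * q) * X2 ^ (2 * r)
      = ∑ q ∈ Finset.range N, ∑ r ∈ Finset.range (n+2),
        (bb n q r : Kfield) * X1 ^ (2 * q) * X2 ^ (2 * r) :=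
        Finset.sum_congr rfl fun q _ => inner M h' q
    _ = ∑ q ∈ Finset.range (n+2), ∑ r ∈ Finset.range (n+2),
        (bb n q r : Kfield) * X1 ^ (2 * q) * X2 ^ (2 * r) := by
        refine (Finset.sum_subset (Finset.range_subset_range.2 h) ?_).symm
        intro q _ hq
        refine Finset.sum_eq_zero fun r _ => ?_
        rw [bb_zero_of_lt_q (by simp at hq; omega) r]
        simp

/-- shift in both variables -/
def sh2 (f : ℕ → ℕ → Kfield) : ℕ → ℕ → Kfield
  | q+1, r+1 => f q r
  | _, _ => 0

@[simp] lemma sh2_zl (f : ℕ → ℕ → Kfield) (r : ℕ) : sh2 f 0 r = 0 := by cases r <;> rfl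
@[simp] lemma sh2_zr (f : ℕ → ℕ → Kfield) (q : ℕ) : sh2 f (q+1) 0 = 0 := rfl
@[simp] lemma sh2_s (f : ℕ → ℕ → Kfield) (q r : ℕ) : sh2 f (q+1) (r+1) = f q r := rfl

def shq (f : ℕ → ℕ → Kfield) : ℕ → ℕ → Kfield
  | q+1, r => f q r
  | 0, _ => 0

@[simp] lemma shq_z (f : ℕ → ℕ → Kfield) (r : ℕ) : shq f 0 r = 0 := rfl
@[simp] lemma shq_s (f : ℕ → ℕ → Kfield) (q r : ℕ) : shq f (q+1) r = f q r := rfl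

def shr (f : ℕ → ℕ → Kfield) : ℕ → ℕ → Kfield
  | q, r+1 => f q r
  | _, 0 => 0

@[simp] lemma shr_z (f : ℕ → ℕ → Kfield) (q : ℕ) : shr f q 0 = 0 := rfl
@[simp] lemma shr_s (f : ℕ → ℕ → Kfield) (q r : ℕ) : shr f q (r+1) = f q r := rfl

lemma sum_sh2 (f : ℕ → ℕ → Kfield) (N : ℕ) :
    ∑ q ∈ Finset.range (N+1), ∑ r ∈ Finset.range (N+1), sh2 f q r
      = ∑ q ∈ Finset.range N, ∑ r ∈ Finset.range N, f q r := by
  rw [Finset.sum_range_succ']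
  simp only [sh2_zl, Finset.sum_const_zero, add_zero]
  refine Finset.sum_congr rfl fun q _ => ?_
  rw [Finset.sum_range_succ']
  simp

lemma sum_shq (f : ℕ → ℕ → Kfield) (N M : ℕ) :
    ∑ q ∈ Finset.range (N+1), ∑ r ∈ Finset.range M, shq f q r
      = ∑ q ∈ Finset.range N, ∑ r ∈ Finset.range M, f q r := by
  rw [Finset.sum_range_succ']
  simp

lemma sum_shr (f : ℕ → ℕ → Kfield) (N M : ℕ) :
    ∑ q ∈ Finset.range N, ∑ r ∈ Finset.range (M+1), shr f q r
      = ∑ q ∈ Finset.range N, ∑ r ∈ Finset.range M, f q r := by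
  refine Finset.sum_congr rfl fun q _ => ?_
  rw [Finset.sum_range_succ']
  simp [shr]


lemma rec_Sp (n : ℕ) :
    Sp (n+2) + X1^2 * X2^2 * Sp n = (X1^2 + X2^2 + 1) * Sp (n+1) := by
  set N := n + 4 with hN
  set F : ℕ → ℕ → ℕ → Kfield :=
    fun m q r => (bb m q r : Kfield) * X1 ^ (2 * q) * X2 ^ (2 * r) with hF
  set G2 : ℕ → ℕ → Kfield :=
    fun q r => (bb n q r : Kfield) * X1 ^ (2 * (q+1)) * X2 ^ (2 * (r+1)) with hG2
  set Gq : ℕ → ℕ → Kfield :=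
    fun q r => (bb (n+1) q r : Kfield) * X1 ^ (2 * (q+1)) * X2 ^ (2 * r) with hGq
  set Gr : ℕ → ℕ → Kfield :=
    fun q r => (bb (n+1) q r : Kfield) * X1 ^ (2 * q) * X2 ^ (2 * (r+1)) with hGr
  have h1 : X1^2 * X2^2 * Sp n
      = ∑ q ∈ Finset.range (N+1), ∑ r ∈ Finset.range (N+1), sh2 G2 q r := by
    rw [sum_sh2, ← SS_pad (by omega : n + 2 ≤ N) (by omega : n + 2 ≤ N)]
    unfold SS
    rw [Finset.mul_sum]
    refine Finset.sum_congr rfl fun q _ => ?_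
    rw [Finset.mul_sum]
    refine Finset.sum_congr rfl fun r _ => ?_
    simp only [hG2]
    ring
  have h2 : X1^2 * Sp (n+1)
      = ∑ q ∈ Finset.range (N+1), ∑ r ∈ Finset.range (N+1), shq Gq q r := by
    rw [sum_shq, ← SS_pad (by omega : n + 1 + 2 ≤ N) (by omega : n + 1 + 2 ≤ N + 1)]
    unfold SS
    rw [Finset.mul_sum]
    refine Finset.sum_congr rfl fun q _ => ?_
    rw [Finset.mul_sum]
    refine Finset.sum_congr rfl fun r _ => ?_
    simp only [hGq]
    ring
  have h3 : X2^2 * Sp (n+1)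
      = ∑ q ∈ Finset.range (N+1), ∑ r ∈ Finset.range (N+1), shr Gr q r := by
    rw [sum_shr, ← SS_pad (by omega : n + 1 + 2 ≤ N + 1) (by omega : n + 1 + 2 ≤ N)]
    unfold SS
    rw [Finset.mul_sum]
    refine Finset.sum_congr rfl fun q _ => ?_
    rw [Finset.mul_sum]
    refine Finset.sum_congr rfl fun r _ => ?_
    simp only [hGr]
    ring
  have h4 : Sp (n+2) = ∑ q ∈ Finset.range (N+1), ∑ r ∈ Finset.range (N+1), F (n+2) q r :=
    (SS_pad (by omega) (by omega)).symm
  have h5 : Sp (n+1) = ∑ q ∈ Finset.range (N+1), ∑ r ∈ Finset.range (N+1), F (n+1) q r :=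
    (SS_pad (by omega) (by omega)).symm
  rw [add_mul, add_mul, one_mul, h1, h2, h3, h4, h5,
    ← Finset.sum_add_distrib, ← Finset.sum_add_distrib, ← Finset.sum_add_distrib]
  refine Finset.sum_congr rfl fun q _ => ?_
  rw [← Finset.sum_add_distrib, ← Finset.sum_add_distrib, ← Finset.sum_add_distrib]
  refine Finset.sum_congr rfl fun r _ => ?_
  match q, r with
  | 0, 0 =>
    simp [hF, bb_zero]
  | 0, r+1 =>
    simp only [sh2_zl, shq_z, shr_s, add_zero, zero_add, hF, hGr]
    have := congrArg (fun m : ℕ => (m : Kfield)) (bb_left n r)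
    push_cast at this
    linear_combination (X2 ^ (2 * (r+1))) * this
  | q+1, 0 =>
    simp only [sh2_zr, shq_s, shr_z, add_zero, zero_add, hF, hGq]
    have := congrArg (fun m : ℕ => (m : Kfield)) (bb_bottom n q)
    push_cast at this
    linear_combination (X1 ^ (2 * (q+1))) * this
  | q+1, r+1 =>
    simp only [sh2_s, shq_s, shr_s, hF, hG2, hGq, hGr]
    have := congrArg (fun m : ℕ => (m : Kfield)) (bb_key n q r)
    push_cast at this
    linear_combination (X1 ^ (2 * (q+1)) * X2 ^ (2 * (r+1))) * this

lemma Sp_eq (n : ℕ) : Sp n = X2 ^ (2 * (n + 1)) +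
    ∑ q ∈ Finset.range (n+1), ∑ r ∈ Finset.range (n+1-q),
      (bb n q r : Kfield) * X1 ^ (2 * q) * X2 ^ (2 * r) := by
  unfold Sp SS
  rw [Finset.sum_range_succ]
  have hrow : ∑ r ∈ Finset.range (n+2),
      (bb n (n+1) r : Kfield) * X1 ^ (2 * (n+1)) * X2 ^ (2 * r) = 0 :=
    Finset.sum_eq_zero fun r _ => by rw [bb_zero_of_lt_q (by omega) r]; simp
  rw [hrow, add_zero]
  have key : ∀ q ∈ Finset.range (n+1),
      ∑ r ∈ Finset.range (n+2), (bb n q r : Kfield) * X1 ^ (2 * q) * X2 ^ (2 * r)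
        = (∑ r ∈ Finset.range (n+1-q), (bb n q r : Kfield) * X1 ^ (2 * q) * X2 ^ (2 * r))
          + (if q = 0 then X2 ^ (2 * (n + 1)) else 0) := by
    intro q hq
    rw [Finset.range_eq_Ico,
      ← Finset.sum_Ico_consecutive _ (Nat.zero_le (n+1-q)) (by omega : n+1-q ≤ n+2),
      ← Finset.range_eq_Ico]
    congr 1
    rcases Nat.eq_zero_or_pos q with h0 | h0
    · subst h0
      have : n + 1 - 0 = n + 1 := rfl
      rw [this, if_pos rfl]
      have hI : Finset.Ico (n+1) (n+2) = {n+1} := by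
        ext a; simp [Finset.mem_Ico]
      rw [hI, Finset.sum_singleton, bb_top]
      simp
    · rw [if_neg (by omega)]
      refine Finset.sum_eq_zero fun r hr => ?_
      rw [bb_zero_of_diag h0 (Finset.mem_Ico.1 hr).1]
      simp
  rw [Finset.sum_congr rfl key, Finset.sum_add_distrib, Finset.sum_ite_eq' (Finset.range (n+1)) 0
    (fun _ => X2 ^ (2 * (n + 1)))]
  simp [add_comm]

lemma Sp0 : Sp 0 = 1 + X2^2 := by
  unfold Sp SS
  simp [Finset.sum_range_succ, bb]

lemma Sp1 : Sp 1 = (1 + X2^2)^2 + X1^2 := by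
  unfold Sp SS
  simp [Finset.sum_range_succ, bb]
  ring

lemma Sp2 : Sp 2 = (1 + X2^2)^3 + X1^2 * (2 + 2*X2^2) + X1^4 := by
  unfold Sp SS
  simp [Finset.sum_range_succ, bb]
  ring

lemma somos (n : ℕ) :
    Sp n * Sp (n+2) = Sp (n+1)^2 + X1^(2*n+4) * X2^(2*n+2) := by
  induction n with
  | zero =>
    rw [Sp0, Sp1, Sp2]
    ring
  | succ m ih =>
    have h1 := rec_Sp m
    have h2 := rec_Sp (m+1)
    have e1 : m + 1 + 2 = m + 3 := rfl
    have e2 : m + 1 + 1 = m + 2 := rfl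
    rw [e1, e2] at *
    linear_combination (Sp (m+1)) * h2 - (Sp (m+2)) * h1 + (X1^2 * X2^2) * ih

lemma X1_ne_zero : X1 ≠ 0 := by
  unfold X1
  rw [Ne, IsFractionRing.to_map_eq_zero_iff]
  exact MvPolynomial.X_ne_zero 0

lemma X2_ne_zero : X2 ≠ 0 := by
  unfold X2
  rw [Ne, IsFractionRing.to_map_eq_zero_iff]
  exact MvPolynomial.X_ne_zero 1

def Pn (n : ℕ) : MvPolynomial (Fin 2) ℚ :=
  ∑ q ∈ Finset.range (n+2), ∑ r ∈ Finset.range (n+2),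
    (bb n q r : MvPolynomial (Fin 2) ℚ) * MvPolynomial.X 0 ^ (2*q) * MvPolynomial.X 1 ^ (2*r)

lemma Sp_map (n : ℕ) : Sp n = algebraMap (MvPolynomial (Fin 2) ℚ) Kfield (Pn n) := by
  unfold Sp SS Pn
  rw [map_sum]
  refine Finset.sum_congr rfl fun q _ => ?_
  rw [map_sum]
  refine Finset.sum_congr rfl fun r _ => ?_
  rw [map_mul, map_mul, map_pow, map_pow, map_natCast]
  rfl

lemma Pn_constantCoeff (n : ℕ) : MvPolynomial.constantCoeff (Pn n) = 1 := by
  unfold Pn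
  rw [map_sum]
  rw [Finset.sum_eq_single 0]
  · rw [map_sum, Finset.sum_eq_single 0]
    · simp [bb_zero]
    · intro r _ hr
      simp only [map_mul, map_pow, MvPolynomial.constantCoeff_X]
      rw [zero_pow (by omega : 2 * r ≠ 0)]
      ring
    · intro h
      exact absurd (Finset.mem_range.2 (by omega)) h
  · intro q _ hq
    rw [map_sum]
    refine Finset.sum_eq_zero fun r _ => ?_
    simp only [map_mul, map_pow, MvPolynomial.constantCoeff_X]
    rw [zero_pow (by omega : 2 * q ≠ 0)]
    ring
  · intro h
    exact absurd (Finset.mem_range.2 (by omega)) h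

lemma Sp_ne_zero (n : ℕ) : Sp n ≠ 0 := by
  rw [Sp_map, Ne, IsFractionRing.to_map_eq_zero_iff]
  intro h
  have := Pn_constantCoeff n
  rw [h, map_zero] at this
  exact zero_ne_one this

theorem main (x : ℕ → Kfield) (h1 : x 1 = X1) (h2 : x 2 = X2)
    (hrec : ∀ n : ℕ, 2 ≤ n → x (n + 1) = (x n ^ 2 + 1) / x (n - 1)) :
    ∀ n : ℕ, x (n + 3) = (X1^(n+1))⁻¹ * (X2^n)⁻¹ * Sp n
        ∧ x (n + 4) = (X1^(n+2))⁻¹ * (X2^(n+1))⁻¹ * Sp (n+1) := by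
  have hX1 := X1_ne_zero
  have hX2 := X2_ne_zero
  have hx3 : x 3 = (X2^2 + 1) / X1 := by
    have := hrec 2 le_rfl
    norm_num at this
    rw [this, h1, h2]
  have hx4 : x 4 = (((X2^2 + 1) / X1)^2 + 1) / X2 := by
    have := hrec 3 (by norm_num)
    norm_num at this
    rw [this, hx3, h2]
  intro n
  induction n with
  | zero =>
    constructor
    · show x 3 = _
      rw [hx3, Sp0]
      field_simp
      ring
    · show x 4 = _
      rw [hx4, Sp1]
      field_simp
      ring
  | succ m ih =>
    obtain ⟨ih1, ih2⟩ := ih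
    have e1 : m + 1 + 3 = m + 4 := rfl
    refine ⟨by rw [e1]; exact ih2, ?_⟩
    have hr : x (m + 5) = (x (m + 4) ^ 2 + 1) / x (m + 3) := by
      have := hrec (m + 4) (by omega)
      norm_num at this
      convert this using 3 <;> omega
    show x (m + 5) = (X1^(m+3))⁻¹ * (X2^(m+2))⁻¹ * Sp (m+2)
    rw [hr, ih1, ih2]
    have hs := somos m
    rw [div_eq_iff (by
      refine mul_ne_zero (mul_ne_zero ?_ ?_) (Sp_ne_zero m) <;>
        exact inv_ne_zero (pow_ne_zero _ (by assumption)))]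
    field_simp
    linear_combination (-(X1^(2*m+4) * X2^(2*m+2))) * hs

/-- For the sequence defined by `x_{n+1} = (x_n^2 + 1)/x_{n-1}` with `x₁, x₂` the
indeterminates, for every `n ≥ 0` one has
`x_{n+3} = x₁^{-(n+1)} x₂^{-n} (x₂^{2(n+1)} + ∑_{q+r ≤ n} C(n-r,q) C(n+1-q,r) x₁^{2q} x₂^{2r})`. -/
theorem stmt0 (x : ℕ → Kfield) (h1 : x 1 = X1) (h2 : x 2 = X2)
    (hrec : ∀ n : ℕ, 2 ≤ n → x (n + 1) = (x n ^ 2 + 1) / x (n - 1)) :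
    ∀ n : ℕ, x (n + 3) =
      X1 ^ (-(n + 1 : ℤ)) * X2 ^ (-(n : ℤ)) *
        (X2 ^ (2 * (n + 1)) +
          ∑ q ∈ Finset.range (n + 1), ∑ r ∈ Finset.range (n + 1 - q),
            (((n - r).choose q * (n + 1 - q).choose r : ℕ) : Kfield) *
              X1 ^ (2 * q) * X2 ^ (2 * r)) := by
  intro n
  obtain ⟨h, -⟩ := main x h1 h2 hrec n
  have e1 : X1 ^ (-(n + 1 : ℤ)) = (X1 ^ (n + 1))⁻¹ := by
    rw [show (-(n + 1 : ℤ)) = -((n + 1 : ℕ) : ℤ) by push_cast; ring, zpow_neg, zpow_natCast]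
  have e2 : X2 ^ (-(n : ℤ)) = (X2 ^ n)⁻¹ := by
    rw [zpow_neg, zpow_natCast]
  rw [e1, e2, h, Sp_eq n]
  simp only [bb]
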